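/- arXiv:0904.3436 — 8 statements merged into one kernel-verified Lean document; each statement's English description precedes it below -/
import Mathlib

section
/- Let K be a tropical polyhedral cone in R_max^d generated by a finite set G, and let H = {x | a·x ≤ b·x} be a tropical halfspace given by row vectors a, b ∈ R_max^{1×d} (where a·x denotes max_i (a_i + x_i)). Then the intersection K ∩ H is the tropical cone generated by the set {g ∈ G | a·g ≤ b·g} ∪ {(a·h)·g ⊕ (b·g)·h | g, h ∈ G, a·g ≤ b·g, a·h > b·h}, where (λ)·g denotes tropical scalar multiplication (adding λ to every coordinate) and ⊕ denotes coordinatewise max. -/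
open scoped Classical

noncomputable section

/-- The max-plus semiring `ℝ ∪ {-∞}`: addition is `max` (the lattice `⊔`),
multiplication is `+` (with `⊥ + x = ⊥`). -/
abbrev Rmax := WithBot ℝ

/-- Tropical "dot product" `a·x = max_i (a_i + x_i)`. -/
def dotp {d : ℕ} (a x : Fin d → Rmax) : Rmax := Finset.univ.sup fun i => a i + x i

/-- A tropical (polyhedral) cone: closed under coordinatewise max and
tropical scalar multiplication (adding a scalar to every coordinate). -/
def IsTropCone {d : ℕ} (C : Set (Fin d → Rmax)) : Prop :=
  (∀ x ∈ C, ∀ y ∈ C, x ⊔ y ∈ C) ∧ (∀ x ∈ C, ∀ lam : Rmax, (fun i => lam + x i) ∈ C)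

/-- `g` is extreme in `C`: `g ∈ C` and `g = v ⊔ w` with `v, w ∈ C` forces `g = v` or `g = w`. -/
def TropExtreme {ι : Type*} (C : Set (ι → Rmax)) (g : ι → Rmax) : Prop :=
  g ∈ C ∧ ∀ v ∈ C, ∀ w ∈ C, g = v ⊔ w → g = v ∨ g = w

/-- `g` is extreme of type `t` in `C`: `g` is minimal in `{x ∈ C | x t = g t}`. -/
def ExtremeType {ι : Type*} (C : Set (ι → Rmax)) (g : ι → Rmax) (t : ι) : Prop :=
  g ∈ C ∧ ∀ x ∈ C, x ≤ g → x t = g t → x = g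

/-- The tropical cone defined by the system of inequalities `A·x ≤ B·x`. -/
def coneOf {d n : ℕ} (A B : Fin n → Fin d → Rmax) : Set (Fin d → Rmax) :=
  { x | ∀ k, dotp (A k) x ≤ dotp (B k) x }

/-- `argmax(c·g) = {i | c_i + g_i = c·g}`. -/
def argmaxSet {d : ℕ} (c g : Fin d → Rmax) : Finset (Fin d) :=
  Finset.univ.filter fun i => c i + g i = dotp c g

/-- The tangent cone of `{x | A·x ≤ B·x}` at `g`. -/
def tangentCone {d n : ℕ} (A B : Fin n → Fin d → Rmax) (g : Fin d → Rmax) :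
    Set (Fin d → Rmax) :=
  { x | ∀ k, dotp (A k) g = dotp (B k) g →
      (argmaxSet (A k) g).sup x ≤ (argmaxSet (B k) g).sup x }

/-- The tropical cone generated by a finite set `G`: all tropical linear
combinations `⊕_{g ∈ G} λ_g ⊗ g`. -/
def genCone {d : ℕ} (G : Finset (Fin d → Rmax)) : Set (Fin d → Rmax) :=
  { x | ∃ lam : (Fin d → Rmax) → Rmax, x = fun i => G.sup fun g => lam g + g i }

/-! Both sides are tropical cones and the new generators lie in `genCone G ∩ H`, which gives `⊇`.
For `⊆`, write `x = ⊕ λ_g g` with `a·x ≤ b·x`. Since the inequality holds for `x`, the maximum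
defining `b·x` is attained at a generator `g` satisfying it, so every term `λ_h h` with `h`
violating the inequality has `λ_h + a·h ≤ λ_g + b·g`. Then `(λ_h - b·g)·((a·h)·g ⊕ (b·g)·h)`
lies between `λ_h h` and `λ_g g ⊕ λ_h h ≤ x`, so replacing each such term by this multiple of a
new generator does not change `x`. -/

open Finset

section Scalars

lemma Rmax.add_sup (c x y : Rmax) : c + (x ⊔ y) = (c + x) ⊔ (c + y) :=
  (monotone_id.const_add c).map_max

lemma Rmax.sup_add (x y c : Rmax) : (x ⊔ y) + c = (x + c) ⊔ (y + c) :=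
  (monotone_id.add_const c).map_max

lemma Rmax.add_finset_sup {κ : Type*} (c : Rmax) (s : Finset κ) (f : κ → Rmax) :
    c + s.sup f = s.sup fun k => c + f k :=
  apply_sup_eq_sup_comp_of_linearOrder (c + ·) (monotone_id.const_add c) (WithBot.add_bot c)

end Scalars

section Vectors

variable {ι κ : Type*}

lemma Rmax.vadd_sup (c : Rmax) (x y : ι → Rmax) : c +ᵥ (x ⊔ y) = (c +ᵥ x) ⊔ (c +ᵥ y) :=
  funext fun i => Rmax.add_sup c (x i) (y i)

lemma Rmax.sup_vadd (c c' : Rmax) (x : ι → Rmax) : (c ⊔ c') +ᵥ x = (c +ᵥ x) ⊔ (c' +ᵥ x) :=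
  funext fun i => Rmax.sup_add c c' (x i)

lemma Rmax.bot_vadd (x : ι → Rmax) : (⊥ : Rmax) +ᵥ x = ⊥ :=
  funext fun i => WithBot.bot_add (x i)

lemma Rmax.vadd_bot (c : Rmax) : c +ᵥ (⊥ : ι → Rmax) = ⊥ :=
  funext fun _ => WithBot.add_bot c

lemma Rmax.vadd_le_vadd_right {c c' : Rmax} (h : c ≤ c') (x : ι → Rmax) : c +ᵥ x ≤ c' +ᵥ x :=
  fun i => add_le_add_left h (x i)

lemma Rmax.vadd_finset_sup (c : Rmax) (s : Finset κ) (f : κ → ι → Rmax) :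
    c +ᵥ s.sup f = s.sup fun k => c +ᵥ f k :=
  apply_sup_eq_sup_comp _ (Rmax.vadd_sup c) (Rmax.vadd_bot c)

lemma Rmax.finset_sup_vadd_eq (s : Finset κ) (lam : κ → Rmax) (f : κ → ι → Rmax) :
    s.sup (fun k => lam k +ᵥ f k) = fun i => s.sup fun k => lam k + f k i :=
  funext fun i => Finset.sup_apply s _ i

end Vectors

section Dotp

variable {d : ℕ} {κ : Type*}

lemma dotp_sup (c x y : Fin d → Rmax) : dotp c (x ⊔ y) = dotp c x ⊔ dotp c y := by
  simp only [dotp, Pi.sup_apply, Rmax.add_sup]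
  exact Finset.sup_sup

lemma dotp_bot (c : Fin d → Rmax) : dotp c ⊥ = ⊥ := by
  simp [dotp]

lemma dotp_vadd (c : Fin d → Rmax) (μ : Rmax) (x : Fin d → Rmax) :
    dotp c (μ +ᵥ x) = μ + dotp c x := by
  rw [dotp, dotp, Rmax.add_finset_sup]
  exact Finset.sup_congr rfl fun i _ => add_left_comm (c i) μ (x i)

lemma dotp_finset_sup_vadd (c : Fin d → Rmax) (s : Finset κ) (lam : κ → Rmax)
    (f : κ → Fin d → Rmax) :
    dotp c (s.sup fun k => lam k +ᵥ f k) = s.sup fun k => lam k + dotp c (f k) := by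
  rw [apply_sup_eq_sup_comp _ (dotp_sup c) (dotp_bot c)]
  exact Finset.sup_congr rfl fun k _ => dotp_vadd c (lam k) (f k)

end Dotp

section Cones

variable {d : ℕ} {κ : Type*} {C D : Set (Fin d → Rmax)}

lemma IsTropCone.sup_mem (hC : IsTropCone C) {x y : Fin d → Rmax} (hx : x ∈ C) (hy : y ∈ C) :
    x ⊔ y ∈ C :=
  hC.1 x hx y hy

lemma IsTropCone.vadd_mem (hC : IsTropCone C) {x : Fin d → Rmax} (hx : x ∈ C) (c : Rmax) :
    c +ᵥ x ∈ C :=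
  hC.2 x hx c

lemma IsTropCone.inter (hC : IsTropCone C) (hD : IsTropCone D) : IsTropCone (C ∩ D) :=
  ⟨fun _ hx _ hy => ⟨hC.sup_mem hx.1 hy.1, hD.sup_mem hx.2 hy.2⟩,
    fun _ hx c => ⟨hC.vadd_mem hx.1 c, hD.vadd_mem hx.2 c⟩⟩

lemma IsTropCone.finset_sup_mem (hC : IsTropCone C) (hbot : ⊥ ∈ C) {s : Finset κ}
    {f : κ → Fin d → Rmax} (hf : ∀ k ∈ s, f k ∈ C) : s.sup f ∈ C :=
  Finset.sup_mem C hbot hC.1 s f hf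

lemma IsTropCone.finset_sup_mem_of_forall_between (hC : IsTropCone C) (hbot : ⊥ ∈ C)
    {s : Finset κ} {u : κ → Fin d → Rmax} (h : ∀ k ∈ s, ∃ w ∈ C, u k ≤ w ∧ w ≤ s.sup u) :
    s.sup u ∈ C := by
  choose! w hwC hlow hup using h
  rw [le_antisymm (Finset.sup_mono_fun hlow) (Finset.sup_le hup)]
  exact hC.finset_sup_mem hbot hwC

lemma isTropCone_halfspace (a b : Fin d → Rmax) : IsTropCone {x | dotp a x ≤ dotp b x} := by
  refine ⟨fun x hx y hy => ?_, fun x hx c => ?_⟩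
  · show dotp a (x ⊔ y) ≤ dotp b (x ⊔ y)
    rw [dotp_sup, dotp_sup]
    exact sup_le_sup hx hy
  · show dotp a (c +ᵥ x) ≤ dotp b (c +ᵥ x)
    rw [dotp_vadd, dotp_vadd]
    exact add_le_add_right hx c

lemma mem_genCone {G : Finset (Fin d → Rmax)} {x : Fin d → Rmax} :
    x ∈ genCone G ↔ ∃ lam : (Fin d → Rmax) → Rmax, x = G.sup fun g => lam g +ᵥ g := by
  simp only [Rmax.finset_sup_vadd_eq]
  rfl

lemma isTropCone_genCone (G : Finset (Fin d → Rmax)) : IsTropCone (genCone G) := by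
  refine ⟨fun x hx y hy => ?_, fun x hx c => ?_⟩
  · obtain ⟨l, rfl⟩ := mem_genCone.1 hx
    obtain ⟨l', rfl⟩ := mem_genCone.1 hy
    refine mem_genCone.2 ⟨l ⊔ l', ?_⟩
    rw [← Finset.sup_sup]
    exact Finset.sup_congr rfl fun g _ => (Rmax.sup_vadd (l g) (l' g) g).symm
  · obtain ⟨l, rfl⟩ := mem_genCone.1 hx
    refine mem_genCone.2 ⟨fun g => c + l g, ?_⟩
    show c +ᵥ (G.sup fun g => l g +ᵥ g) = _
    rw [Rmax.vadd_finset_sup]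
    exact Finset.sup_congr rfl fun g _ => vadd_vadd c (l g) g

lemma bot_mem_genCone (G : Finset (Fin d → Rmax)) : ⊥ ∈ genCone G :=
  mem_genCone.2 ⟨⊥, by simp only [Pi.bot_apply, Rmax.bot_vadd, Finset.sup_bot]⟩

lemma subset_genCone (G : Finset (Fin d → Rmax)) : (G : Set (Fin d → Rmax)) ⊆ genCone G := by
  intro g hg
  refine mem_genCone.2 ⟨fun g' => if g' = g then 0 else ⊥, le_antisymm ?_ (Finset.sup_le ?_)⟩
  · simpa using Finset.le_sup (f := fun g' => (if g' = g then (0 : Rmax) else ⊥) +ᵥ g') hg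
  · intro g' _
    dsimp only
    split_ifs with h
    · rw [h, zero_vadd]
    · rw [Rmax.bot_vadd]
      exact bot_le

lemma genCone_subset {G : Finset (Fin d → Rmax)} (hC : IsTropCone C) (hbot : ⊥ ∈ C)
    (hG : (G : Set (Fin d → Rmax)) ⊆ C) : genCone G ⊆ C := by
  intro x hx
  obtain ⟨lam, rfl⟩ := mem_genCone.1 hx
  exact hC.finset_sup_mem hbot fun g hg => hC.vadd_mem (hG hg) (lam g)

end Cones

section Halfspace

variable {d : ℕ} (a b : Fin d → Rmax)

def pairComb (g h : Fin d → Rmax) : Fin d → Rmax :=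
  (dotp a h +ᵥ g) ⊔ (dotp b g +ᵥ h)

def halfspaceGens (G : Finset (Fin d → Rmax)) : Finset (Fin d → Rmax) :=
  G.filter (fun g => dotp a g ≤ dotp b g) ∪
    ((G ×ˢ G).filter fun p => dotp a p.1 ≤ dotp b p.1 ∧ dotp b p.2 < dotp a p.2).image
      fun p => pairComb a b p.1 p.2

variable {a b}

lemma dotp_pairComb (c g h : Fin d → Rmax) :
    dotp c (pairComb a b g h) = (dotp a h + dotp c g) ⊔ (dotp b g + dotp c h) := by
  rw [pairComb, dotp_sup, dotp_vadd, dotp_vadd]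

lemma pairComb_mem_halfspace {g : Fin d → Rmax} (hg : dotp a g ≤ dotp b g) (h : Fin d → Rmax) :
    dotp a (pairComb a b g h) ≤ dotp b (pairComb a b g h) := by
  rw [dotp_pairComb, dotp_pairComb]
  exact le_sup_of_le_left (sup_le (add_le_add_right hg _) (add_comm _ _).le)

lemma halfspaceGens_subset (G : Finset (Fin d → Rmax)) :
    (halfspaceGens a b G : Set (Fin d → Rmax)) ⊆ genCone G ∩ {x | dotp a x ≤ dotp b x} := by
  intro z hz
  rcases Finset.mem_union.1 hz with hz | hz
  · obtain ⟨hzG, hsat⟩ := Finset.mem_filter.1 hz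
    exact ⟨subset_genCone G hzG, hsat⟩
  · obtain ⟨⟨g, h⟩, hp, rfl⟩ := Finset.mem_image.1 hz
    obtain ⟨hgh, hgsat, -⟩ := Finset.mem_filter.1 hp
    obtain ⟨hg, hh⟩ := Finset.mem_product.1 hgh
    have hC := isTropCone_genCone G
    exact ⟨hC.sup_mem (hC.vadd_mem (subset_genCone G hg) _) (hC.vadd_mem (subset_genCone G hh) _),
      pairComb_mem_halfspace hgsat h⟩

lemma exists_dotp_eq_of_mem_halfspace {G : Finset (Fin d → Rmax)} (lam : (Fin d → Rmax) → Rmax)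
    (hx : dotp a (G.sup fun g => lam g +ᵥ g) ≤ dotp b (G.sup fun g => lam g +ᵥ g))
    (hne : dotp b (G.sup fun g => lam g +ᵥ g) ≠ ⊥) :
    ∃ g ∈ G, dotp a g ≤ dotp b g ∧
      dotp b (G.sup fun g => lam g +ᵥ g) = lam g + dotp b g := by
  simp only [dotp_finset_sup_vadd] at hx hne ⊢
  have hG : G.Nonempty := Finset.nonempty_iff_ne_empty.2 fun hG => hne (by rw [hG, sup_empty])
  obtain ⟨g, hg, hmax⟩ := Finset.exists_mem_eq_sup G hG fun g => lam g + dotp b g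
  refine ⟨g, hg, not_lt.1 fun hviol => ?_, hmax⟩
  have hlam : lam g ≠ ⊥ := fun hl => hne (by rw [hmax, hl, WithBot.bot_add])
  refine lt_irrefl (lam g + dotp b g) ?_
  calc lam g + dotp b g < lam g + dotp a g := WithBot.add_lt_add_left hlam hviol
    _ ≤ G.sup fun g => lam g + dotp a g := Finset.le_sup (f := fun g => lam g + dotp a g) hg
    _ ≤ G.sup fun g => lam g + dotp b g := hx
    _ = lam g + dotp b g := hmax

lemma exists_vadd_pairComb_between {g h : Fin d → Rmax} {lg lh : Rmax}
    (hne : lh + dotp a h ≠ ⊥) (hle : lh + dotp a h ≤ lg + dotp b g) :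
    ∃ ν : Rmax, lh +ᵥ h ≤ ν +ᵥ pairComb a b g h ∧
      ν +ᵥ pairComb a b g h ≤ (lg +ᵥ g) ⊔ (lh +ᵥ h) := by
  have hbg : dotp b g ≠ ⊥ := fun hb => hne (le_bot_iff.1 (by simpa [hb] using hle))
  obtain ⟨s, hs⟩ := WithBot.ne_bot_iff_exists.1 hbg
  have hνb : lh + ↑(-s) + dotp b g = lh := by
    rw [← hs, add_assoc, ← WithBot.coe_add, neg_add_cancel, WithBot.coe_zero, add_zero]
  have hνa : lh + ↑(-s) + dotp a h ≤ lg :=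
    calc lh + ↑(-s) + dotp a h = lh + dotp a h + ↑(-s) := add_right_comm _ _ _
      _ ≤ lg + ↑s + ↑(-s) := by rw [hs]; exact add_le_add_left hle _
      _ = lg := by rw [add_assoc, ← WithBot.coe_add, add_neg_cancel, WithBot.coe_zero, add_zero]
  refine ⟨lh + ↑(-s), ?_, ?_⟩ <;> rw [pairComb, Rmax.vadd_sup, vadd_vadd, vadd_vadd, hνb]
  · exact le_sup_right
  · exact sup_le_sup_right (Rmax.vadd_le_vadd_right hνa g) _

lemma mem_genCone_halfspaceGens {G : Finset (Fin d → Rmax)} {x : Fin d → Rmax}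
    (hxG : x ∈ genCone G) (hx : dotp a x ≤ dotp b x) : x ∈ genCone (halfspaceGens a b G) := by
  have hC := isTropCone_genCone (halfspaceGens a b G)
  obtain ⟨lam, rfl⟩ := mem_genCone.1 hxG
  refine hC.finset_sup_mem_of_forall_between (bot_mem_genCone _) fun h hh => ?_
  by_cases hsat : dotp a h ≤ dotp b h
  · have hgen : h ∈ halfspaceGens a b G := mem_union_left _ (mem_filter.2 ⟨hh, hsat⟩)
    exact ⟨lam h +ᵥ h, hC.vadd_mem (subset_genCone _ hgen) _, le_rfl,
      le_sup (f := fun g => lam g +ᵥ g) hh⟩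
  by_cases hlam : lam h = ⊥
  · exact ⟨⊥, bot_mem_genCone _, by rw [hlam, Rmax.bot_vadd], bot_le⟩
  have hne : lam h + dotp a h ≠ ⊥ :=
    WithBot.add_ne_bot.2 ⟨hlam, (bot_le.trans_lt (not_le.1 hsat)).ne'⟩
  have hax : lam h + dotp a h ≤ dotp b (G.sup fun g => lam g +ᵥ g) := by
    refine le_trans ?_ hx
    rw [dotp_finset_sup_vadd]
    exact le_sup (f := fun g => lam g + dotp a g) hh
  obtain ⟨g, hg, hgsat, hbx⟩ :=
    exists_dotp_eq_of_mem_halfspace lam hx fun hb => hne (le_bot_iff.1 (hax.trans_eq hb))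
  obtain ⟨ν, hlow, hup⟩ := exists_vadd_pairComb_between hne (hax.trans_eq hbx)
  have hgen : pairComb a b g h ∈ halfspaceGens a b G :=
    mem_union_right _ (mem_image.2
      ⟨(g, h), mem_filter.2 ⟨mem_product.2 ⟨hg, hh⟩, hgsat, not_le.1 hsat⟩, rfl⟩)
  refine ⟨_, hC.vadd_mem (subset_genCone _ hgen) ν, hlow, hup.trans (sup_le ?_ ?_)⟩
  · exact le_sup (f := fun g => lam g +ᵥ g) hg
  · exact le_sup (f := fun g => lam g +ᵥ g) hh

end Halfspace

/-- Th. 1 (elementary step of the double description method): the intersection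
of the cone generated by `G` with the halfspace `{x | a·x ≤ b·x}` is generated
by the elements of `G` satisfying the inequality together with the combinations
`(a·h)·g ⊕ (b·g)·h` for `g` satisfying it and `h` violating it. -/
theorem stmt0 {d : ℕ} (G : Finset (Fin d → Rmax)) (a b : Fin d → Rmax) :
    genCone G ∩ { x | dotp a x ≤ dotp b x } =
      genCone
        ((G.filter fun g => dotp a g ≤ dotp b g) ∪
          ((G ×ˢ G).filter
              (fun p => dotp a p.1 ≤ dotp b p.1 ∧ dotp b p.2 < dotp a p.2)).image
            (fun p => fun i => (dotp a p.2 + p.1 i) ⊔ (dotp b p.1 + p.2 i))) := by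
  show _ = genCone (halfspaceGens a b G)
  refine Set.Subset.antisymm (fun x hx => mem_genCone_halfspaceGens hx.1 hx.2) ?_
  refine genCone_subset ((isTropCone_genCone G).inter (isTropCone_halfspace a b)) ?_
    (halfspaceGens_subset G)
  exact ⟨bot_mem_genCone G, show dotp a ⊥ ≤ dotp b ⊥ by rw [dotp_bot, dotp_bot]⟩
end
end

section
/- Let C ⊆ R_max^d be a tropical polyhedral cone, g ∈ C a nonzero element, and S = supp(g) = {i | g_i ≠ -∞}. Let D = {x ∈ C | supp(x) ⊆ S} and let π_S be the projection onto the coordinates in S. Then the following are equivalent: (i) g is extreme in C; (ii) g is extreme in D; (iii) π_S(g) is extreme in π_S(D). -/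
open scoped Classical

noncomputable section

/-- The support of a vector: coordinates different from `-∞`. -/
def supp {d : ℕ} (x : Fin d → Rmax) : Set (Fin d) := { i | x i ≠ ⊥ }


/- Every `v ≤ g` has support inside `supp g`, so a decomposition `g = v ⊔ w` in `C` already
takes place in `D`; this gives (i) ↔ (ii). On vectors supported in `S`, the projection `π_S` is
injective and commutes with `⊔`, so decompositions of `g` in `D` and of `π_S g` in `π_S D`
correspond to each other; this gives (ii) ↔ (iii). -/

section TropExtreme

variable {ι κ : Type*}

theorem tropExtreme_iff_of_subset {C D : Set (ι → Rmax)} {g : ι → Rmax} (hDC : D ⊆ C)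
    (hdown : ∀ v ∈ C, v ≤ g → v ∈ D) : TropExtreme C g ↔ TropExtreme D g := by
  constructor
  · rintro ⟨hgC, hext⟩
    exact ⟨hdown g hgC le_rfl, fun v hv w hw => hext v (hDC hv) w (hDC hw)⟩
  · rintro ⟨hgD, hext⟩
    refine ⟨hDC hgD, fun v hv w hw hvw => hext v ?_ w ?_ hvw⟩
    · exact hdown v hv (hvw ▸ le_sup_left)
    · exact hdown w hw (hvw ▸ le_sup_right)

theorem tropExtreme_image_iff {f : (ι → Rmax) → κ → Rmax} {T D : Set (ι → Rmax)}
    {g : ι → Rmax} (hf : ∀ v w, f (v ⊔ w) = f v ⊔ f w) (hT : SupClosed T) (hinj : T.InjOn f)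
    (hDT : D ⊆ T) (hgT : g ∈ T) : TropExtreme (f '' D) (f g) ↔ TropExtreme D g := by
  constructor
  · rintro ⟨⟨x, hxD, hxg⟩, hext⟩
    obtain rfl : x = g := hinj (hDT hxD) hgT hxg
    refine ⟨hxD, fun v hv w hw hvw => ?_⟩
    rcases hext _ ⟨v, hv, rfl⟩ _ ⟨w, hw, rfl⟩ (hf v w ▸ congrArg f hvw) with h | h
    · exact Or.inl (hinj hgT (hDT hv) h)
    · exact Or.inr (hinj hgT (hDT hw) h)
  · rintro ⟨hgD, hext⟩
    refine ⟨⟨g, hgD, rfl⟩, ?_⟩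
    rintro _ ⟨v, hv, rfl⟩ _ ⟨w, hw, rfl⟩ hvw
    have hg : g = v ⊔ w := hinj hgT (hT (hDT hv) (hDT hw)) (hvw.trans (hf v w).symm)
    exact (hext v hv w hw hg).imp (congrArg f) (congrArg f)

end TropExtreme

section Support

variable {d : ℕ}

theorem eq_bot_of_supp_subset {x : Fin d → Rmax} {S : Set (Fin d)} (hx : supp x ⊆ S) {i : Fin d}
    (hi : i ∉ S) : x i = ⊥ :=
  not_not.mp fun h => hi (hx h)

theorem supp_mono {v g : Fin d → Rmax} (hvg : v ≤ g) : supp v ⊆ supp g :=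
  fun i hi hgi => hi (le_bot_iff.mp (hgi ▸ hvg i))

theorem supClosed_setOf_supp_subset (S : Set (Fin d)) :
    SupClosed {x : Fin d → Rmax | supp x ⊆ S} := by
  intro x hx y hy i hi
  by_contra hiS
  exact hi (by simp [eq_bot_of_supp_subset hx hiS, eq_bot_of_supp_subset hy hiS])

theorem injOn_domRestrict_setOf_supp_subset (S : Set (Fin d)) :
    {x : Fin d → Rmax | supp x ⊆ S}.InjOn S.domRestrict := by
  intro x hx y hy hxy
  funext i
  by_cases hi : i ∈ S
  · exact congrFun hxy ⟨i, hi⟩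
  · rw [eq_bot_of_supp_subset hx hi, eq_bot_of_supp_subset hy hi]

end Support

theorem stmt3_general {d : ℕ} (C : Set (Fin d → Rmax))
    (g : Fin d → Rmax) :
    (TropExtreme C g ↔ TropExtreme { x ∈ C | supp x ⊆ supp g } g) ∧
      (TropExtreme { x ∈ C | supp x ⊆ supp g } g ↔
        TropExtreme ((supp g).restrict '' { x ∈ C | supp x ⊆ supp g })
          ((supp g).restrict g)) :=
  ⟨tropExtreme_iff_of_subset (fun _ hx => hx.1) fun _ hv hvg => ⟨hv, supp_mono hvg⟩,
    (tropExtreme_image_iff (fun _ _ => rfl) (supClosed_setOf_supp_subset _)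
      (injOn_domRestrict_setOf_supp_subset _) (fun _ hx => hx.2) fun _ hi => hi).symm⟩

/-- Prop.: extremality of `g` in `C`, in `D = {x ∈ C | supp x ⊆ supp g}`, and of
the projection of `g` on its support in the projection of `D`, are equivalent. -/
theorem stmt3 {d : ℕ} (C : Set (Fin d → Rmax)) (hC : IsTropCone C)
    (g : Fin d → Rmax) (hg : g ∈ C) (hg0 : g ≠ fun _ => (⊥ : Rmax)) :
    (TropExtreme C g ↔ TropExtreme { x ∈ C | supp x ⊆ supp g } g) ∧
      (TropExtreme { x ∈ C | supp x ⊆ supp g } g ↔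
        TropExtreme ((supp g).restrict '' { x ∈ C | supp x ⊆ supp g })
          ((supp g).restrict g)) :=
  stmt3_general C g
end
end

section
/- Let D ⊆ R_max^d be a tropical cone defined by a system C·x ≤ D·x where all the entries of the matrices C, D lie in {-∞, 0} (i.e., D is the solution set of finitely many inequalities of the form max_{i ∈ I_k} x_i ≤ max_{j ∈ J_k} x_j for subsets I_k, J_k of {1,...,d}). Then the all-zeros vector 𝟙 (every coordinate equal to 0) is extreme of type t in D if and only if 𝟙 is the unique element x of D ∩ {-∞, 0}^d satisfying x_t = 0. -/
open scoped Classical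

noncomputable section

/-!
If `x ≤ 𝟙` lies in the cone and `x t = 0`, collapse `x` to its zero pattern
(`0` where `x i = 0`, `-∞` elsewhere). This collapse is a monotone map of `Rmax` fixing `⊥`,
so it commutes with finite maxima and keeps every constraint `max_I x ≤ max_J x`;
the collapsed vector is then a `{-∞, 0}`-vector of the cone with `t`-coordinate `0`.
This replaces the limit of `k·x` as `k → ∞`.
-/

theorem Finset.sup_comp_le_sup_comp {ι α β : Type*} [LinearOrder α] [OrderBot α]
    [SemilatticeSup β] [OrderBot β] {f : α → β} (hf : Monotone f) (hbot : f ⊥ = ⊥)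
    {s u : Finset ι} {x : ι → α} (h : s.sup x ≤ u.sup x) : s.sup (f ∘ x) ≤ u.sup (f ∘ x) := by
  rw [← Finset.apply_sup_eq_sup_comp_of_linearOrder f hf hbot,
    ← Finset.apply_sup_eq_sup_comp_of_linearOrder f hf hbot]
  exact hf h

/-- Testing `0 ≤ a` rather than `a = 0` makes the collapse monotone on all of `Rmax`;
the two agree on vectors below `𝟙`. -/
def zeroPattern (a : Rmax) : Rmax := if 0 ≤ a then 0 else ⊥

theorem monotone_zeroPattern : Monotone zeroPattern := by
  intro a b hab
  unfold zeroPattern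
  split_ifs with ha hb
  · exact le_rfl
  · exact absurd (ha.trans hab) hb
  all_goals exact bot_le

theorem zeroPattern_bot : zeroPattern ⊥ = ⊥ := by
  simp [zeroPattern]

theorem zeroPattern_eq_bot_or_eq_zero (a : Rmax) : zeroPattern a = ⊥ ∨ zeroPattern a = 0 := by
  unfold zeroPattern
  split_ifs <;> simp

theorem zeroPattern_eq_zero_iff {a : Rmax} (ha : a ≤ 0) : zeroPattern a = 0 ↔ a = 0 := by
  unfold zeroPattern
  split_ifs with h
  · simp [le_antisymm ha h]
  · simp only [WithBot.bot_ne_zero, false_iff]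
    rintro rfl
    exact h le_rfl

/-- Prop.: in a `{0,-∞}`-cone `D` (defined by constraints
`max_{i ∈ I k} x_i ≤ max_{j ∈ J k} x_j`), the all-zeros vector `𝟙` is extreme of
type `t` iff it is the unique element `x` of `D ∩ {-∞,0}^d` with `x t = 0`. -/
theorem stmt4 {d n : ℕ} (I J : Fin n → Finset (Fin d)) (t : Fin d) :
    ExtremeType { x : Fin d → Rmax | ∀ k, (I k).sup x ≤ (J k).sup x }
        (fun _ => (0 : Rmax)) t ↔
      ((fun _ => (0 : Rmax)) ∈ { x : Fin d → Rmax | ∀ k, (I k).sup x ≤ (J k).sup x } ∧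
        ∀ x ∈ { x : Fin d → Rmax | ∀ k, (I k).sup x ≤ (J k).sup x },
          (∀ i, x i = ⊥ ∨ x i = 0) → x t = 0 → x = fun _ => (0 : Rmax)) := by
  constructor
  · rintro ⟨h1, hext⟩
    refine ⟨h1, fun x hx hx01 hxt => hext x hx (fun i => ?_) hxt⟩
    rcases hx01 i with h | h <;> simp [h]
  · rintro ⟨h1, huniq⟩
    refine ⟨h1, fun x hx hle hxt => ?_⟩
    have hcollapse : zeroPattern ∘ x = fun _ => 0 :=
      huniq _ (fun k => Finset.sup_comp_le_sup_comp monotone_zeroPattern zeroPattern_bot (hx k))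
        (fun i => zeroPattern_eq_bot_or_eq_zero (x i))
        ((zeroPattern_eq_zero_iff (hle t)).mpr hxt)
    funext i
    exact (zeroPattern_eq_zero_iff (hle i)).mp (congrFun hcollapse i)
end
end

section
/- Let C = {x ∈ R_max^d | A·x ≤ B·x} be a tropical cone defined by n inequalities, and let g ∈ C with supp(g) = {1,...,d}. Define the tangent cone T(g,C) as the set of x ∈ R_max^d satisfying, for each row k with A_k·g = B_k·g, the inequality max_{i ∈ argmax(A_k·g)} x_i ≤ max_{j ∈ argmax(B_k·g)} x_j. Then there exists a neighborhood N of g such that for all x ∈ N, x ∈ C if and only if x - g ∈ T(g,C) (where subtraction is coordinatewise, valid since all g_i are finite). -/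
open scoped Classical

noncomputable section

instance : TopologicalSpace Rmax := Preorder.topology Rmax

/-!
Near `g`, every tropical form `c·x = max_i (c_i + x_i)` only sees the indices of `argmax(c·g)`:
the other terms lie strictly below the maximum at `g`, hence, by continuity, in a neighbourhood
of `g`. On the argmax, `c_i + x_i = c·g + (x_i - g_i)`, so near `g` we get
`c·x = c·g + max_{i ∈ argmax(c·g)} (x_i - g_i)`. A row with `A_k·g = B_k·g` therefore holds at `x`
iff the tangent inequality holds at `x - g`, while a row with `A_k·g < B_k·g` stays strict near `g`.
-/

open Filter Topology

instance Rmax.instOrderTopology : OrderTopology Rmax := ⟨rfl⟩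

section FinsetSup

variable {X α ι : Type*} [TopologicalSpace X] [LinearOrder α] [OrderBot α]

lemma Finset.sup_filter_sup_eq (s : Finset ι) (f : ι → α) :
    (s.filter fun i => f i = s.sup f).sup f = s.sup f := by
  refine le_antisymm (Finset.sup_mono (Finset.filter_subset _ _)) ?_
  rcases s.eq_empty_or_nonempty with rfl | hs
  · simp
  obtain ⟨i, hi, hmax⟩ := Finset.exists_mem_eq_sup s hs f
  exact hmax.le.trans (Finset.le_sup (Finset.mem_filter.2 ⟨hi, hmax.symm⟩))

variable [TopologicalSpace α] [OrderClosedTopology α]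

lemma eventually_finset_sup_eq_sup_filter {x₀ : X} (s : Finset ι) (f : ι → X → α)
    (hf : ∀ i ∈ s, ContinuousAt (f i) x₀) :
    ∀ᶠ x in 𝓝 x₀, s.sup (f · x) = (s.filter fun i => f i x₀ = s.sup (f · x₀)).sup (f · x) := by
  set t := s.filter fun i => f i x₀ = s.sup (f · x₀)
  have ht : ContinuousAt (fun x => t.sup (f · x)) x₀ :=
    ContinuousAt.finset_sup_apply fun i hi => hf i (Finset.filter_subset _ _ hi)
  have hlt : ∀ i ∈ s \ t, ∀ᶠ x in 𝓝 x₀, f i x < t.sup (f · x) := by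
    intro i hi
    obtain ⟨his, hit⟩ := Finset.mem_sdiff.1 hi
    refine (hf i his).eventually_lt ht ?_
    rw [Finset.sup_filter_sup_eq s (f · x₀)]
    exact (Finset.le_sup (f := (f · x₀)) his).lt_of_ne fun h => hit (Finset.mem_filter.2 ⟨his, h⟩)
  filter_upwards [(eventually_all_finset (s \ t)).2 hlt] with x hx
  refine le_antisymm (Finset.sup_le fun i hi => ?_) (Finset.sup_mono (Finset.filter_subset _ _))
  by_cases hit : i ∈ t
  · exact Finset.le_sup (f := (f · x)) hit
  · exact (hx i (Finset.mem_sdiff.2 ⟨hi, hit⟩)).le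

end FinsetSup

lemma Rmax.continuous_const_add (c : Rmax) : Continuous (c + ·) := by
  cases c using WithBot.recBotCoe with
  | bot => simpa using continuous_const
  | coe r =>
    refine Monotone.continuous_of_surjective (monotone_id.const_add _) fun y => ?_
    cases y using WithBot.recBotCoe with
    | bot => exact ⟨⊥, WithBot.add_bot _⟩
    | coe s => exact ⟨((s - r : ℝ) : Rmax), by rw [← WithBot.coe_add, add_sub_cancel]⟩

lemma continuous_dotp {d : ℕ} (c : Fin d → Rmax) : Continuous (dotp c) :=
  Continuous.finset_sup_apply (f := fun i (x : Fin d → Rmax) => c i + x i) fun i _ =>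
    (Rmax.continuous_const_add (c i)).comp (continuous_apply i)

lemma argmaxSet_eq_univ_of_dotp_eq_bot {d : ℕ} {c g : Fin d → Rmax} (h : dotp c g = ⊥) :
    argmaxSet c g = Finset.univ :=
  Finset.filter_true_of_mem fun i _ =>
    h ▸ le_bot_iff.1 (h ▸ Finset.le_sup (f := fun i => c i + g i) (Finset.mem_univ i))

section FiniteBase

variable {d : ℕ} (g : Fin d → ℝ)

lemma eventually_dotp_eq (c : Fin d → Rmax) :
    ∀ᶠ x in 𝓝 (fun i => (g i : Rmax)), dotp c x = dotp c (fun i => (g i : Rmax)) +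
      (argmaxSet c (fun i => (g i : Rmax))).sup fun i => x i + ((-g i : ℝ) : Rmax) := by
  filter_upwards [eventually_finset_sup_eq_sup_filter Finset.univ
    (fun i (x : Fin d → Rmax) => c i + x i)
    fun i _ => ((Rmax.continuous_const_add (c i)).comp (continuous_apply i)).continuousAt]
    with x hx
  rw [dotp, hx, Finset.apply_sup_eq_sup_comp_of_linearOrder (dotp c (fun i => (g i : Rmax)) + ·)
    (monotone_id.const_add _) (WithBot.add_bot _)]
  refine Finset.sup_congr rfl fun i hi => ?_
  rw [Function.comp_apply, ← (Finset.mem_filter.1 hi).2, add_add_add_comm, ← WithBot.coe_add,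
    add_neg_cancel, WithBot.coe_zero, add_zero]

lemma eventually_dotp_le_iff (a b : Fin d → Rmax)
    (hab : dotp a (fun i => (g i : Rmax)) ≤ dotp b (fun i => (g i : Rmax))) :
    ∀ᶠ x in 𝓝 (fun i => (g i : Rmax)), dotp a x ≤ dotp b x ↔
      (dotp a (fun i => (g i : Rmax)) = dotp b (fun i => (g i : Rmax)) →
        (argmaxSet a (fun i => (g i : Rmax))).sup (fun i => x i + ((-g i : ℝ) : Rmax)) ≤
          (argmaxSet b (fun i => (g i : Rmax))).sup (fun i => x i + ((-g i : ℝ) : Rmax))) := by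
  rcases hab.lt_or_eq with hlt | heq
  · filter_upwards [(continuous_dotp a).continuousAt.eventually_lt
      (continuous_dotp b).continuousAt hlt] with x hx
    exact iff_of_true hx.le fun h => absurd h hlt.ne
  · filter_upwards [eventually_dotp_eq g a, eventually_dotp_eq g b] with x ha hb
    rw [ha, hb, heq, eq_self_iff_true, true_imp_iff]
    rcases eq_or_ne (dotp b (fun i => (g i : Rmax))) ⊥ with hbot | hne
    · rw [argmaxSet_eq_univ_of_dotp_eq_bot (heq.trans hbot), argmaxSet_eq_univ_of_dotp_eq_bot hbot]
      simp [hbot]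
    · exact WithBot.add_le_add_iff_left hne

end FiniteBase

/-- Prop.: the tangent cone `T(g,C)` describes `C` locally around `g` (with
`supp g = {1,…,d}`, i.e. all coordinates of `g` finite): there is a
neighborhood `N` of `g` such that for `x ∈ N`, `x ∈ C` iff `x - g ∈ T(g,C)`. -/
theorem stmt5 {d n : ℕ} (A B : Fin n → Fin d → Rmax) (g' : Fin d → ℝ)
    (hg : (fun i => ((g' i : ℝ) : Rmax)) ∈ coneOf A B) :
    ∃ N ∈ nhds (fun i => ((g' i : ℝ) : Rmax)), ∀ x ∈ N,
      x ∈ coneOf A B ↔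
        (fun i => x i + ((-g' i : ℝ) : Rmax)) ∈
          tangentCone A B (fun i => ((g' i : ℝ) : Rmax)) :=
  eventually_iff_exists_mem.1 <| (eventually_all.2 fun k =>
    eventually_dotp_le_iff g' (A k) (B k) (hg k)).mono fun _ hx => forall_congr' hx
end
end

section
/- Let C ⊆ R_max^d be a tropical cone defined by inequalities A·x ≤ B·x, and g ∈ C with all coordinates finite. Then g is extreme of type t in C if and only if the all-zeros vector 𝟙 is the unique element of T(g,C) ∩ {-∞, 0}^d whose t-th coordinate equals 0. -/
open scoped Classical

noncomputable section

open Topology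

/-!
For `⇐`: a point `z ∈ C` with `z ≤ g` and `z t = g t` determines the `{-∞, 0}`-vector that is `0`
exactly where `z = g`; it lies in `T(g, C)` (in a row tight at `g`, a maximizing index of `A·g`
kept by `z` forces one of `B·g` kept by `z`), so it is `𝟙` and `z = g`.

For `⇒`: a `{-∞, 0}`-vector `x ∈ T(g, C)` with `x t = 0` gives the point `y = g - ε` off the zero
set of `x`. For small `ε > 0` it satisfies every inequality: rows strict at `g` and non-maximal
terms have room `ε`, and in a tight row either the tangent condition supplies a maximizing term
of `B·g` left unchanged, or every maximizing term of `A·g` drops by `ε`. Extremality forces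
`y = g`, i.e. `x = 𝟙`.
-/

section Dotp

variable {d : ℕ}

lemma le_dotp (c x : Fin d → Rmax) (i : Fin d) : c i + x i ≤ dotp c x :=
  Finset.le_sup (f := fun i => c i + x i) (Finset.mem_univ i)

lemma exists_dotp_eq [Nonempty (Fin d)] (c x : Fin d → Rmax) : ∃ i, dotp c x = c i + x i := by
  obtain ⟨i, -, h⟩ := Finset.exists_mem_eq_sup Finset.univ Finset.univ_nonempty
    (fun i => c i + x i)
  exact ⟨i, h⟩

lemma dotp_mono (c : Fin d → Rmax) {x y : Fin d → Rmax} (h : x ≤ y) : dotp c x ≤ dotp c y :=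
  Finset.sup_mono_fun fun i _ => add_le_add_right (h i) (c i)

lemma add_dotp (M : Rmax) (c x : Fin d → Rmax) : M + dotp c x = dotp c fun i => M + x i := by
  rw [dotp, dotp, Finset.apply_sup_eq_sup_comp_of_linearOrder (M + ·)
    (fun _ _ h => add_le_add_right h M) (WithBot.add_bot M)]
  simp only [Function.comp_def, add_left_comm M]

lemma mem_argmaxSet {c g : Fin d → Rmax} {i : Fin d} :
    i ∈ argmaxSet c g ↔ c i + g i = dotp c g := by
  simp [argmaxSet]

lemma argmaxSet_nonempty [Nonempty (Fin d)] (c g : Fin d → Rmax) : (argmaxSet c g).Nonempty :=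
  let ⟨i, hi⟩ := exists_dotp_eq c g
  ⟨i, mem_argmaxSet.2 hi.symm⟩

lemma exists_mem_eq_zero_of_zero_le_sup {S : Finset (Fin d)} {x : Fin d → Rmax}
    (hx : ∀ i, x i = ⊥ ∨ x i = 0) (h : 0 ≤ S.sup x) : ∃ j ∈ S, x j = 0 := by
  obtain ⟨j, hj, h0j⟩ := (Finset.le_sup_iff (WithBot.bot_lt_coe 0)).1 h
  refine ⟨j, hj, (hx j).resolve_left fun hbot => ?_⟩
  rw [hbot] at h0j
  exact WithBot.coe_ne_bot (le_bot_iff.1 h0j)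

lemma dotp_le_dotp_of_mem_argmaxSet {a b g y : Fin d → Rmax} {j : Fin d}
    (hab : dotp a g = dotp b g) (hj : j ∈ argmaxSet b g) (hyg : y ≤ g) (hyj : y j = g j) :
    dotp a y ≤ dotp b y :=
  calc dotp a y ≤ dotp a g := dotp_mono a hyg
    _ = b j + g j := hab.trans (mem_argmaxSet.1 hj).symm
    _ = b j + y j := by rw [hyj]
    _ ≤ dotp b y := le_dotp b y j

lemma add_dotp_le_of_lower_argmaxSet {a g y : Fin d → Rmax} {M : Rmax} (hyg : y ≤ g)
    (hlower : ∀ i ∈ argmaxSet a g, M + y i ≤ g i)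
    (hgap : ∀ i, a i + g i < dotp a g → M + (a i + g i) ≤ dotp a g) :
    M + dotp a y ≤ dotp a g := by
  rw [add_dotp]
  refine Finset.sup_le fun i _ => ?_
  by_cases hi : i ∈ argmaxSet a g
  · calc a i + (M + y i) ≤ a i + g i := add_le_add_right (hlower i hi) (a i)
      _ = dotp a g := mem_argmaxSet.1 hi
  · calc a i + (M + y i) = M + (a i + y i) := add_left_comm _ _ _
      _ ≤ M + (a i + g i) := add_le_add_right (add_le_add_right (hyg i) _) M
      _ ≤ dotp a g := hgap i (lt_of_le_of_ne (le_dotp a g i) (mt mem_argmaxSet.2 hi))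

end Dotp

lemma eventually_coe_add_le {u v : Rmax} (h : u < v) :
    ∀ᶠ M : ℝ in 𝓝[>] 0, (M : Rmax) + u ≤ v := by
  induction u using WithBot.recBotCoe with
  | bot => exact Filter.Eventually.of_forall fun M => by simp
  | coe u =>
    induction v using WithBot.recBotCoe with
    | bot => exact absurd h (not_lt_bot)
    | coe v =>
      have hlt : (0 : ℝ) < v - u := sub_pos.2 (WithBot.coe_lt_coe.1 h)
      filter_upwards [nhdsWithin_le_nhds (eventually_lt_nhds hlt)] with M hM
      rw [← WithBot.coe_add, WithBot.coe_le_coe]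
      linarith

lemma eventually_forall_coe_add_le {ι : Type*} [Finite ι] (u v : ι → Rmax) :
    ∀ᶠ M : ℝ in 𝓝[>] 0, ∀ i, u i < v i → (M : Rmax) + u i ≤ v i :=
  Filter.eventually_all.2 fun _ => Filter.eventually_imp_distrib_left.2 eventually_coe_add_le

section TangentCone

variable {d n : ℕ} {A B : Fin n → Fin d → Rmax}

lemma zero_mem_tangentCone_of_nonempty [Nonempty (Fin d)] (g : Fin d → Rmax) :
    (fun _ => (0 : Rmax)) ∈ tangentCone A B g := by
  intro k _
  rw [Finset.sup_const (argmaxSet_nonempty _ g), Finset.sup_const (argmaxSet_nonempty _ g)]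

lemma exists_mem_argmaxSet_eq_of_mem_coneOf {g z : Fin d → Rmax} (hz : z ∈ coneOf A B)
    (hzg : z ≤ g) {k : Fin n} (hk : dotp (A k) g = dotp (B k) g) {i : Fin d}
    (hi : i ∈ argmaxSet (A k) g) (hzi : z i = g i) : ∃ j ∈ argmaxSet (B k) g, z j = g j := by
  have : Nonempty (Fin d) := ⟨i⟩
  by_cases hbot : dotp (B k) g = ⊥
  · refine ⟨i, mem_argmaxSet.2 ?_, hzi⟩
    exact le_bot_iff.1 (hbot ▸ le_dotp _ g i) |>.trans hbot.symm
  obtain ⟨j, hj⟩ := exists_dotp_eq (B k) z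
  have hchain : dotp (B k) g ≤ B k j + z j :=
    calc dotp (B k) g = A k i + z i := by rw [hzi, mem_argmaxSet.1 hi, hk]
      _ ≤ dotp (A k) z := le_dotp _ z i
      _ ≤ dotp (B k) z := hz k
      _ = B k j + z j := hj
  have hjg : B k j + g j = dotp (B k) g :=
    le_antisymm (le_dotp _ g j) (hchain.trans (add_le_add_right (hzg j) _))
  have hBj : B k j ≠ ⊥ := fun h => hbot (le_bot_iff.1 (by simpa [h] using hchain))
  exact ⟨j, mem_argmaxSet.2 hjg,
    WithBot.add_left_cancel hBj (le_antisymm (add_le_add_right (hzg j) _) (hjg ▸ hchain))⟩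

lemma ite_eq_mem_tangentCone_of_mem_coneOf {g z : Fin d → Rmax} (hz : z ∈ coneOf A B)
    (hzg : z ≤ g) : (fun i => if z i = g i then (0 : Rmax) else ⊥) ∈ tangentCone A B g := by
  intro k hk
  refine Finset.sup_le fun i hi => ?_
  split_ifs with hzi
  · obtain ⟨j, hj, hzj⟩ := exists_mem_argmaxSet_eq_of_mem_coneOf hz hzg hk hi hzi
    exact (if_pos hzj).symm.le.trans (Finset.le_sup (f := fun i => if z i = g i then _ else _) hj)
  · exact bot_le

lemma extremeType_coneOf_of_tangentCone {g : Fin d → Rmax} (hg : g ∈ coneOf A B) (t : Fin d)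
    (huniq : ∀ x ∈ tangentCone A B g, (∀ i, x i = ⊥ ∨ x i = 0) → x t = 0 →
      x = fun _ => (0 : Rmax)) :
    ExtremeType (coneOf A B) g t := by
  refine ⟨hg, fun z hz hzg hzt => funext fun i => ?_⟩
  have hx := huniq _ (ite_eq_mem_tangentCone_of_mem_coneOf hz hzg)
    (fun i => by by_cases h : z i = g i <;> simp [h]) (by simp [hzt])
  by_contra hzi
  simpa [hzi] using congrFun hx i

lemma lowered_mem_coneOf {g x y : Fin d → Rmax} {M : ℝ} (hg : g ∈ coneOf A B)
    (hx : x ∈ tangentCone A B g) (hx01 : ∀ i, x i = ⊥ ∨ x i = 0)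
    (hyg : y ≤ g) (hgy : ∀ i, g i ≤ M + y i)
    (hkeep : ∀ i, x i = 0 → y i = g i) (hlower : ∀ i, x i ≠ 0 → M + y i ≤ g i)
    (hrow : ∀ k, dotp (A k) g < dotp (B k) g → M + dotp (A k) g ≤ dotp (B k) g)
    (hterm : ∀ k i, A k i + g i < dotp (A k) g → M + (A k i + g i) ≤ dotp (A k) g) :
    y ∈ coneOf A B := by
  intro k
  have hBy : dotp (B k) g ≤ M + dotp (B k) y := by
    rw [add_dotp]; exact dotp_mono _ hgy
  suffices h : (M : Rmax) + dotp (A k) y ≤ dotp (B k) g ∨ dotp (A k) y ≤ dotp (B k) y by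
    rcases h with h | h
    · exact (WithBot.add_le_add_iff_left WithBot.coe_ne_bot).1 (h.trans hBy)
    · exact h
  rcases (hg k).lt_or_eq with hlt | heq
  · exact .inl ((add_le_add_right (dotp_mono _ hyg) _).trans (hrow k hlt))
  by_cases hzero : ∃ i ∈ argmaxSet (A k) g, x i = 0
  · obtain ⟨i, hi, hxi⟩ := hzero
    have h0 : (0 : Rmax) ≤ (argmaxSet (A k) g).sup x := hxi ▸ Finset.le_sup (f := x) hi
    obtain ⟨j, hj, hxj⟩ := exists_mem_eq_zero_of_zero_le_sup hx01 (h0.trans (hx k heq))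
    exact .inr (dotp_le_dotp_of_mem_argmaxSet heq hj hyg (hkeep j hxj))
  · push Not at hzero
    exact .inl (heq ▸ add_dotp_le_of_lower_argmaxSet hyg (fun i hi => hlower i (hzero i hi))
      (hterm k))

lemma eq_zero_of_extremeType_coneOf {g' : Fin d → ℝ} {t : Fin d}
    (hext : ExtremeType (coneOf A B) (fun i => (g' i : Rmax)) t)
    {x : Fin d → Rmax} (hx : x ∈ tangentCone A B fun i => (g' i : Rmax))
    (hx01 : ∀ i, x i = ⊥ ∨ x i = 0) (hxt : x t = 0) : x = fun _ => (0 : Rmax) := by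
  set g : Fin d → Rmax := fun i => (g' i : Rmax)
  obtain ⟨M, hrow, hterm, hM⟩ :=
    ((eventually_forall_coe_add_le (fun k => dotp (A k) g) (fun k => dotp (B k) g)).and
      ((eventually_forall_coe_add_le (fun p : Fin n × Fin d => A p.1 p.2 + g p.2)
        (fun p => dotp (A p.1) g)).and self_mem_nhdsWithin)).exists
  set y : Fin d → Rmax := fun i => ((if x i = 0 then g' i else g' i - M : ℝ) : Rmax)
  have hM : (0 : ℝ) < M := hM
  have hyg : y ≤ g := fun i => by
    simp only [y, g, WithBot.coe_le_coe]; split_ifs <;> linarith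
  have hyC : y ∈ coneOf A B := by
    refine lowered_mem_coneOf hext.1 hx hx01 hyg (fun i => ?_) (fun i hi => ?_) (fun i hi => ?_)
      hrow (fun k i => hterm (k, i))
    · simp only [y, g, ← WithBot.coe_add, WithBot.coe_le_coe]; split_ifs <;> linarith
    · simp [y, g, hi]
    · simp only [y, g, if_neg hi, ← WithBot.coe_add, WithBot.coe_le_coe]; linarith
  have hy_eq : y = g := hext.2 y hyC hyg (by simp [y, g, hxt])
  funext i
  by_contra hxi
  have := congrFun hy_eq i
  simp only [y, g, if_neg hxi, WithBot.coe_inj] at this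
  linarith

end TangentCone

/-- Th. 2: `g` (all coordinates finite) is extreme of type `t` in
`C = {x | A·x ≤ B·x}` iff the all-zeros vector `𝟙` is the unique element of
`T(g,C) ∩ {-∞,0}^d` whose `t`-th coordinate is `0`. -/
theorem stmt7 {d n : ℕ} (A B : Fin n → Fin d → Rmax) (g' : Fin d → ℝ) (t : Fin d)
    (hg : (fun i => ((g' i : ℝ) : Rmax)) ∈ coneOf A B) :
    ExtremeType (coneOf A B) (fun i => ((g' i : ℝ) : Rmax)) t ↔
      ((fun _ => (0 : Rmax)) ∈ tangentCone A B (fun i => ((g' i : ℝ) : Rmax)) ∧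
        ∀ x ∈ tangentCone A B (fun i => ((g' i : ℝ) : Rmax)),
          (∀ i, x i = ⊥ ∨ x i = 0) → x t = 0 → x = fun _ => (0 : Rmax)) := by
  have : Nonempty (Fin d) := ⟨t⟩
  exact ⟨fun hext => ⟨zero_mem_tangentCone_of_nonempty _, fun _ hx hx01 hxt =>
      eq_zero_of_extremeType_coneOf hext hx hx01 hxt⟩,
    fun h => extremeType_coneOf_of_tangentCone hg t h.2⟩
end
end

section
/- Let C ⊆ R_max^d be a tropical cone defined by A·x ≤ B·x, g ∈ C with all finite coordinates, and let H(g,C) be the directed hypergraph with node set {1,...,d} and one hyperedge (argmax(B_k·g), argmax(A_k·g)) for each row k with A_k·g = B_k·g. Then for all l, t ∈ {1,...,d}, the statement [for all x ∈ T(g,C) ∩ {-∞,0}^d, x_l = -∞ implies x_t = -∞] holds if and only if t is reachable from l in the hypergraph H(g,C). -/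
open scoped Classical

noncomputable section

/-- Reachability in a directed hypergraph with hyperedges `(tail, head)`:
`u ⇝ u`, and if every node of the tail of a hyperedge is reachable from `u`
then so is every node of its head. -/
inductive HReach {ν : Type*} (E : Set (Set ν × Set ν)) : ν → ν → Prop
  | refl (u : ν) : HReach E u u
  | step (u v : ν) (e : Set ν × Set ν) (he : e ∈ E) (hv : v ∈ e.2)
      (ht : ∀ w ∈ e.1, HReach E u w) : HReach E u v

/-- The strongly connected component of `u` for a reachability relation `r`. -/
def SCCof {ν : Type*} (r : ν → ν → Prop) (u : ν) : Set ν := { v | r u v ∧ r v u }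

/-- `C` is a strongly connected component for the reachability relation `r`. -/
def IsSCC {ν : Type*} (r : ν → ν → Prop) (C : Set ν) : Prop := ∃ u, C = SCCof r u

/-- The order on SCCs: `C₁ ⪯ C₂` iff some representative of `C₁` is reachable
from some representative of `C₂`. -/
def sccLE {ν : Type*} (r : ν → ν → Prop) (C₁ C₂ : Set ν) : Prop :=
  ∃ u ∈ C₁, ∃ v ∈ C₂, r v u

/-- `C` is a minimal SCC for the order `⪯`. -/
def MinSCC {ν : Type*} (r : ν → ν → Prop) (C : Set ν) : Prop :=
  IsSCC r C ∧ ∀ D, IsSCC r D → sccLE r D C → D = C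

/-- Edges of the digraph `G(H)` associated to a hypergraph: pairs `(t, h)`
such that some hyperedge has singleton tail `{t}` and `h` in its head. -/
def graphEdge {ν : Type*} (E : Set (Set ν × Set ν)) : ν → ν → Prop :=
  fun t h => ∃ e ∈ E, e.1 = {t} ∧ h ∈ e.2

/-- Reachability in the digraph `G(H)`. -/
def GReach {ν : Type*} (E : Set (Set ν × Set ν)) : ν → ν → Prop :=
  Relation.ReflTransGen (graphEdge E)

/-- The directed hypergraph `H(g,C)` attached to the tangent cone: one
hyperedge `(argmax(B_k·g), argmax(A_k·g))` for each saturated row `k`. -/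
def hyperOf {d n : ℕ} (A B : Fin n → Fin d → Rmax) (g : Fin d → Rmax) :
    Set (Set (Fin d) × Set (Fin d)) :=
  { e | ∃ k, dotp (A k) g = dotp (B k) g ∧
      e = ({ i | B k i + g i = dotp (B k) g }, { i | A k i + g i = dotp (A k) g }) }


/-!
The coordinates where a tangent vector is `⊥` form a set closed under the hyperedges of
`H(g,C)`: row `k` of the tangent cone makes `x` vanish on `argmax(A_k·g)` as soon as it vanishes
on `argmax(B_k·g)`. Conversely, the `{⊥, 0}`-vector vanishing exactly on the nodes reachable
from `l` lies in the tangent cone, so no unreachable `t` is forced to vanish.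
-/

section TangentCone

variable {d n : ℕ} {A B : Fin n → Fin d → Rmax} {g : Fin d → Rmax}

lemma coe_argmaxSet (c g : Fin d → Rmax) :
    (argmaxSet c g : Set (Fin d)) = { i | c i + g i = dotp c g } := by
  ext i
  simp [argmaxSet]

lemma argmax_mem_hyperOf {k : Fin n} (hk : dotp (A k) g = dotp (B k) g) :
    ((argmaxSet (B k) g : Set (Fin d)), (argmaxSet (A k) g : Set (Fin d))) ∈ hyperOf A B g :=
  ⟨k, hk, by rw [coe_argmaxSet, coe_argmaxSet]⟩

theorem HReach.eq_bot_of_mem_tangentCone {x : Fin d → Rmax} (hx : x ∈ tangentCone A B g)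
    {l t : Fin d} (hlt : HReach (hyperOf A B g) l t) (hl : x l = ⊥) : x t = ⊥ := by
  induction hlt with
  | refl => exact hl
  | step v e he hv _ ih =>
    obtain ⟨k, hk, rfl⟩ := he
    have htail : (argmaxSet (B k) g).sup x = ⊥ :=
      (Finset.sup_eq_bot_iff _ _).mpr fun w hw => ih w (by simpa [argmaxSet] using hw)
    have hhead : v ∈ argmaxSet (A k) g := by simpa [argmaxSet] using hv
    exact le_bot_iff.mp ((Finset.le_sup hhead).trans ((hx k hk).trans_eq htail))

def reachIndicator {ν : Type*} (E : Set (Set ν × Set ν)) (l : ν) : ν → Rmax :=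
  fun i => if HReach E l i then ⊥ else 0

lemma reachIndicator_eq_bot_or_eq_zero {ν : Type*} (E : Set (Set ν × Set ν)) (l i : ν) :
    reachIndicator E l i = ⊥ ∨ reachIndicator E l i = 0 := by
  unfold reachIndicator
  split_ifs <;> simp

/-- If the whole tail of a saturated row is reachable, so is its head and the left-hand side
is `⊥`; otherwise the right-hand side is `0`, which bounds every `{⊥, 0}`-vector. -/
theorem reachIndicator_mem_tangentCone (l : Fin d) :
    reachIndicator (hyperOf A B g) l ∈ tangentCone A B g := by
  intro k hk
  set x := reachIndicator (hyperOf A B g) l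
  by_cases htail : ∀ j ∈ argmaxSet (B k) g, HReach (hyperOf A B g) l j
  · have hhead : (argmaxSet (A k) g).sup x = ⊥ :=
      (Finset.sup_eq_bot_iff _ _).mpr fun i hi => if_pos <|
        HReach.step l i _ (argmax_mem_hyperOf hk) hi htail
    exact hhead.trans_le bot_le
  · obtain ⟨j, hj, hjl⟩ := not_forall₂.mp htail
    calc (argmaxSet (A k) g).sup x ≤ 0 :=
          Finset.sup_le fun i _ => (reachIndicator_eq_bot_or_eq_zero _ l i).elim
            (fun h => h.trans_le bot_le) le_of_eq
      _ = x j := (if_neg hjl).symm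
      _ ≤ (argmaxSet (B k) g).sup x := Finset.le_sup hj

end TangentCone

theorem stmt9_general {d n : ℕ} (A B : Fin n → Fin d → Rmax) (g' : Fin d → ℝ) :
    ∀ l t : Fin d,
      ((∀ x ∈ tangentCone A B (fun i => ((g' i : ℝ) : Rmax)),
          (∀ i, x i = ⊥ ∨ x i = 0) → x l = ⊥ → x t = ⊥) ↔
        HReach (hyperOf A B (fun i => ((g' i : ℝ) : Rmax))) l t) := by
  intro l t
  refine ⟨fun h => ?_, fun hlt x hx _ hl => hlt.eq_bot_of_mem_tangentCone hx hl⟩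
  by_contra hlt
  have := h _ (reachIndicator_mem_tangentCone l) (reachIndicator_eq_bot_or_eq_zero _ l)
    (if_pos (HReach.refl l))
  simp [reachIndicator, hlt] at this

/-- Prop. 6: for `g ∈ C` with all coordinates finite, the propagation statement
"every `{-∞,0}`-vector of `T(g,C)` with `x l = -∞` has `x t = -∞`" holds iff
`t` is reachable from `l` in the hypergraph `H(g,C)`. -/
theorem stmt9 {d n : ℕ} (A B : Fin n → Fin d → Rmax) (g' : Fin d → ℝ)
    (hg : (fun i => ((g' i : ℝ) : Rmax)) ∈ coneOf A B) :
    ∀ l t : Fin d,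
      ((∀ x ∈ tangentCone A B (fun i => ((g' i : ℝ) : Rmax)),
          (∀ i, x i = ⊥ ∨ x i = 0) → x l = ⊥ → x t = ⊥) ↔
        HReach (hyperOf A B (fun i => ((g' i : ℝ) : Rmax))) l t) :=
  stmt9_general A B g'
end
end

section
/- Let H = (N,E) be a directed hypergraph and x, y ∈ N two nodes in the same strongly connected component of H. Let f map x and y to a fresh node z and every other node to itself, and let f(H) be the hypergraph with nodes f(N) and hyperedges {(f(T(e)), f(H(e))) | e ∈ E}. Then for all u, v ∈ N, v is reachable from u in H if and only if f(v) is reachable from f(u) in f(H). -/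
/-!
Pushing a derivation forward along any node map `f` shows that reachability is preserved.
Conversely, if every fibre of `f` is strongly connected, a derivation of `f u ⇝ w` in `f(H)` can be
pulled back to `u ⇝ n` for every `n` with `f n = w`: each hyperedge used comes from a hyperedge
of `H`, whose tail nodes are reached by induction, and the chosen head node reaches every node of
its fibre. Merging `x ≡ y` into `z` is such a map.
-/

open scoped Classical

noncomputable section

namespace HReach

variable {ν μ : Type*} {E : Set (Set ν × Set ν)}

def mapEdges (f : ν → μ) (E : Set (Set ν × Set ν)) : Set (Set μ × Set μ) :=
  (fun e : Set ν × Set ν => (f '' e.1, f '' e.2)) '' E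

lemma trans {u v w : ν} (h₁ : HReach E u v) (h₂ : HReach E v w) : HReach E u w := by
  induction h₂ with
  | refl => exact h₁
  | step w e he hw _ ih => exact step u w e he hw ih

lemma map (f : ν → μ) {u v : ν} (h : HReach E u v) : HReach (mapEdges f E) (f u) (f v) := by
  induction h with
  | refl => exact refl _
  | step v e he hv _ ih =>
    refine step _ _ _ ⟨e, he, rfl⟩ ⟨v, hv, rfl⟩ ?_
    rintro _ ⟨w, hw, rfl⟩
    exact ih w hw

lemma of_map {f : ν → μ} (hf : ∀ n m, f n = f m → HReach E n m) {u v : ν}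
    (h : HReach (mapEdges f E) (f u) (f v)) : HReach E u v := by
  suffices key : ∀ w, HReach (mapEdges f E) (f u) w → ∀ n, f n = w → HReach E u n from
    key _ h v rfl
  intro w hw
  induction hw with
  | refl => exact fun n hn => hf u n hn.symm
  | step _ _ he' hw _ ih =>
    obtain ⟨e, he, rfl⟩ := he'
    obtain ⟨w, hw, rfl⟩ := hw
    have hreach : HReach E u w := step u w e he hw fun t ht => ih (f t) ⟨t, ht, rfl⟩ t rfl
    exact fun n hn => hreach.trans (hf w n hn.symm)

lemma map_iff {f : ν → μ} (hf : ∀ n m, f n = f m → HReach E n m) {u v : ν} :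
    HReach (mapEdges f E) (f u) (f v) ↔ HReach E u v :=
  ⟨of_map hf, map f⟩

end HReach

def mergeNodes {ν : Type*} (x y : ν) (n : ν) : ν ⊕ Unit :=
  if n = x ∨ n = y then Sum.inr () else Sum.inl n

lemma mergeNodes_eq_iff {ν : Type*} {x y n m : ν} :
    mergeNodes x y n = mergeNodes x y m ↔
      n = m ∨ (n = x ∨ n = y) ∧ (m = x ∨ m = y) := by
  unfold mergeNodes
  split_ifs with hn hm hm <;> aesop

lemma HReach.of_mergeNodes_eq {ν : Type*} {E : Set (Set ν × Set ν)} {x y : ν}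
    (hxy : HReach E x y ∧ HReach E y x) {n m : ν} (h : mergeNodes x y n = mergeNodes x y m) :
    HReach E n m := by
  obtain rfl | ⟨rfl | rfl, rfl | rfl⟩ := mergeNodes_eq_iff.mp h
  all_goals first | exact refl _ | exact hxy.1 | exact hxy.2

/-- Prop. 8: merging two nodes `x ≡ y` of a same SCC into a fresh node `z`
does not alter the reachability relation of the hypergraph. -/
theorem stmt14 {ν : Type*} (E : Set (Set ν × Set ν)) (x y : ν)
    (hxy : HReach E x y ∧ HReach E y x) :
    ∀ u v : ν,
      HReach E u v ↔
        HReach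
          ((fun e : Set ν × Set ν =>
              ((fun n => if n = x ∨ n = y then Sum.inr () else Sum.inl n) '' e.1,
               (fun n => if n = x ∨ n = y then Sum.inr () else Sum.inl n) '' e.2)) '' E)
          (if u = x ∨ u = y then Sum.inr () else Sum.inl u)
          (if v = x ∨ v = y then Sum.inr () else Sum.inl v) := fun _ _ =>
  (HReach.map_iff (f := mergeNodes x y) fun _ _ => HReach.of_mergeNodes_eq hxy).symm
end
end

section
/- Let C ⊆ R_max^d be a tropical polyhedral cone and g ∈ C. Then g is extreme of type t in C if and only if there exists a neighborhood V of g such that g is a minimal element of {x ∈ C ∩ V | x_t = g_t} for the coordinatewise order (i.e., extremality is a local property). -/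
/-! For `x ∈ C` with `x ≤ g` and `x t = g t`, the points `x ⊔ (α + g)`, `α < 0`, of the tropical
segment `[x, g]` lie in `C`, below `g`, with `t`-th coordinate `g t`, and tend to `g` as `α → 0`.
So one of them lies in the neighbourhood `V` and equals `g`; since `α + g i < g i` unless
`g i = -∞`, this forces `x = g`. -/

open scoped Classical

noncomputable section

instance : OrderTopology Rmax := ⟨rfl⟩

open Filter Topology

namespace Rmax

lemma coe_add_le_self {α : ℝ} (hα : α ≤ 0) (a : Rmax) : (α : Rmax) + a ≤ a := by
  simpa using add_le_add_left (WithBot.coe_le_coe.2 hα) a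

lemma coe_add_lt_self {α : ℝ} (hα : α < 0) {a : Rmax} (ha : a ≠ ⊥) : (α : Rmax) + a < a := by
  obtain ⟨c, rfl⟩ := WithBot.ne_bot_iff_exists.1 ha
  rw [← WithBot.coe_add, WithBot.coe_lt_coe]
  linarith

lemma tendsto_coe_add (a : Rmax) :
    Tendsto (fun α : ℝ => (α : Rmax) + a) (𝓝 0) (𝓝 a) := by
  induction a using WithBot.recBotCoe with
  | bot => simp
  | coe c =>
    simp_rw [← WithBot.coe_add]
    exact (WithBot.continuous_coe.comp (continuous_id.add continuous_const)).tendsto' 0 _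
      (by simp)

lemma eq_of_sup_coe_add_eq {α : ℝ} (hα : α < 0) {x g : Rmax} (h : x ⊔ ((α : Rmax) + g) = g) :
    x = g := by
  rcases eq_or_ne g ⊥ with hg | hg
  · rw [hg] at h ⊢
    exact le_bot_iff.1 (h ▸ le_sup_left)
  · rcases max_choice x ((α : Rmax) + g) with hx | hx
    · rwa [← hx]
    · exact absurd (hx ▸ h) (coe_add_lt_self hα hg).ne

end Rmax

/-- A point of the tropical segment `[x, g]`. -/
def towards {ι : Type*} (x g : ι → Rmax) (α : ℝ) : ι → Rmax := fun i => x i ⊔ ((α : Rmax) + g i)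

lemma tendsto_towards {ι : Type*} {x g : ι → Rmax} (hxg : x ≤ g) :
    Tendsto (towards x g) (𝓝 0) (𝓝 g) :=
  tendsto_pi_nhds.2 fun i => by
    have h := (tendsto_const_nhds (x := x i)).sup_nhds (Rmax.tendsto_coe_add (g i))
    rwa [sup_eq_right.2 (hxg i)] at h

/-- Prop.: extremality is a local property: `g ∈ C` is extreme of type `t`
iff there is a neighborhood `V` of `g` in which `g` is minimal among the
elements of `C ∩ V` whose `t`-th coordinate equals `g t`. -/
theorem stmt17 {d : ℕ} (C : Set (Fin d → Rmax)) (hC : IsTropCone C)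
    (g : Fin d → Rmax) (hg : g ∈ C) (t : Fin d) :
    ExtremeType C g t ↔
      ∃ V ∈ nhds g, ∀ x ∈ C, x ∈ V → x ≤ g → x t = g t → x = g := by
  refine ⟨fun h => ⟨Set.univ, univ_mem, fun x hx _ => h.2 x hx⟩, ?_⟩
  rintro ⟨V, hV, hmin⟩
  refine ⟨hg, fun x hx hxg hxt => ?_⟩
  obtain ⟨α, hαV, hα⟩ :=
    ((tendsto_towards hxg).mono_left nhdsWithin_le_nhds |>.eventually hV |>.and
      self_mem_nhdsWithin).exists (f := 𝓝[<] (0 : ℝ))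
  have hle : (fun i => (α : Rmax) + g i) ≤ g := fun i => Rmax.coe_add_le_self hα.le (g i)
  have hcurve : towards x g α = g :=
    hmin _ (hC.1 x hx _ (hC.2 g hg α)) hαV (sup_le hxg hle) (by simp [towards, hxt, hle t])
  exact funext fun i => Rmax.eq_of_sup_coe_add_eq hα (congrFun hcurve i)
end
end
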